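/- Let G be a complex m×n matrix with ‖G v‖ ≥ γ₀ ‖v‖ for all v (γ₀ > 0), set A = Gᴴ G, K = A⁻¹ Gᴴ, and fix η with 0 < η < γ₀ and 2(1 − η) − η/γ₀² > 0. Then there exists a constant c₀ > 0, depending only on γ₀ and η, such that for every b ∈ ℂⁿ the function E(t) = ‖r(t)‖² + ‖s(t)‖² − 2η Re⟨r(t), K s(t)⟩ along the residual dynamics w(t) = exp(t M)(b, 0) = (r(t), s(t)) satisfies E(t) ≤ E(0) e^{−c₀ t /(1 + η/γ₀)} for all t ≥ 0; consequently ‖w(t)‖² ≤ ((1 + η/γ₀)/(1 − η/γ₀)) e^{−c₀ t /(1 + η/γ₀)} ‖b‖² for all t ≥ 0. -/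

import Mathlib

open scoped Matrix ComplexInnerProductSpace
open Filter MeasureTheory

noncomputable section

/-- `ℂ^k` with the ℓ² norm. -/
abbrev Evec (k : ℕ) : Type := EuclideanSpace ℂ (Fin k)

/-- The joint space `ℂⁿ ⊕ ℂᵐ` with the ℓ² norm. -/
abbrev Jvec (n m : ℕ) : Type := EuclideanSpace ℂ (Fin n ⊕ Fin m)

/-- A complex matrix viewed as a continuous linear map between Euclidean spaces,
so that `‖matCLM A‖` is the induced ℓ² operator norm. -/
noncomputable def matCLM {α β : Type*} [Fintype α] [Fintype β] [DecidableEq β]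
    (A : Matrix α β ℂ) : EuclideanSpace ℂ β →L[ℂ] EuclideanSpace ℂ α :=
  LinearMap.toContinuousLinearMap (Matrix.toEuclideanLin A)

/-- The block matrix `M = [[0, -Gᴴ], [G, -I]]` on `ℂⁿ ⊕ ℂᵐ`. -/
def blockM {m n : ℕ} (G : Matrix (Fin m) (Fin n) ℂ) :
    Matrix (Fin n ⊕ Fin m) (Fin n ⊕ Fin m) ℂ :=
  Matrix.fromBlocks 0 (-Gᴴ) G (-1)

/-- The matrix exponential `exp (t M)` as a continuous linear map on `ℂⁿ ⊕ ℂᵐ`. -/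
noncomputable def expM {m n : ℕ} (G : Matrix (Fin m) (Fin n) ℂ) (t : ℝ) :
    Jvec n m →L[ℂ] Jvec n m :=
  NormedSpace.exp (t • matCLM (blockM G))

/-- Join two blocks into a joint vector. -/
def joinV {n m : ℕ} (r : Evec n) (s : Evec m) : Jvec n m :=
  (WithLp.equiv 2 _).symm (Sum.elim ((WithLp.equiv 2 _) r) ((WithLp.equiv 2 _) s))

/-- First (residual `r`) block of a joint vector. -/
def rblock {n m : ℕ} (w : Jvec n m) : Evec n :=
  (WithLp.equiv 2 _).symm fun i => w (Sum.inl i)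

/-- Second (residual `s`) block of a joint vector. -/
def sblock {n m : ℕ} (w : Jvec n m) : Evec m :=
  (WithLp.equiv 2 _).symm fun j => w (Sum.inr j)

/-- Residual dynamics `w(t) = exp (t M) (b, 0)`. -/
noncomputable def wdyn {m n : ℕ} (G : Matrix (Fin m) (Fin n) ℂ) (b : Evec n) (t : ℝ) :
    Jvec n m :=
  expM G t (joinV b 0)

/-- Accumulator `x(t) = ∫₀ᵗ r(τ) dτ`. -/
noncomputable def xacc {m n : ℕ} (G : Matrix (Fin m) (Fin n) ℂ) (b : Evec n) (t : ℝ) :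
    Evec n :=
  ∫ τ in (0:ℝ)..t, rblock (wdyn G b τ)

/-!
Along `w' = M w`, i.e. `r' = -Gᴴ s` and `s' = G r - s`, the cross terms `Re ⟪G r, s⟫` cancel and
`K s' = r - K s`, so `E' = -2‖s‖² - 2η‖r‖² + 2η Re ⟪r, K s⟫ + 2η Re ⟪s, G K s⟫`. As `G K` is the
orthogonal projection onto the range of `G` and `‖K‖ ≤ 1/γ₀`, AM-GM bounds this by
`-c₀ (‖r‖² + ‖s‖²)` with `c₀ = min η (2(1 - η) - η/γ₀²)`, while `E` lies between
`(1 ∓ η/γ₀)(‖r‖² + ‖s‖²)`. Hence `E' ≤ -c₀/(1 + η/γ₀) · E`, and Grönwall's inequality gives the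
decay of `E`, hence of `‖w‖²`.
-/

open scoped InnerProduct

lemma le_mul_exp_of_hasDerivAt_le_neg_mul {f f' : ℝ → ℝ} {c t : ℝ}
    (hf : ∀ x, HasDerivAt f (f' x) x) (hbound : ∀ x, 0 ≤ x → f' x ≤ -c * f x) (ht : 0 ≤ t) :
    f t ≤ f 0 * Real.exp (-c * t) := by
  have h := le_gronwallBound_of_liminf_deriv_right_le (f := f) (f' := f') (δ := f 0) (K := -c)
    (ε := 0) (a := 0) (b := t)
    (fun x _ => (hf x).continuousAt.continuousWithinAt)
    (fun x _ _ hlt => (hf x).hasDerivWithinAt.liminf_right_slope_le hlt) le_rfl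
    (fun x hx => by simpa using hbound x hx.1) t ⟨ht, le_rfl⟩
  simpa [gronwallBound_ε0] using h

section Lyapunov

variable {E F : Type*} [NormedAddCommGroup E] [InnerProductSpace ℂ E]
  [NormedAddCommGroup F] [InnerProductSpace ℂ F]

def lyapunov (η : ℝ) (k : F →L[ℂ] E) (r : E) (s : F) : ℝ :=
  ‖r‖ ^ 2 + ‖s‖ ^ 2 - 2 * η * (⟪r, k s⟫).re

lemma abs_lyapunov_sub_le {γ₀ η : ℝ} {k : F →L[ℂ] E} (hγ : 0 < γ₀) (hη : 0 ≤ η)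
    (hk : ∀ s, ‖k s‖ ≤ ‖s‖ / γ₀) (r : E) (s : F) :
    |lyapunov η k r s - (‖r‖ ^ 2 + ‖s‖ ^ 2)| ≤ η / γ₀ * (‖r‖ ^ 2 + ‖s‖ ^ 2) := by
  have hinner : |(⟪r, k s⟫).re| ≤ ‖r‖ * (‖s‖ / γ₀) :=
    (Complex.abs_re_le_norm _).trans
      ((norm_inner_le_norm r (k s)).trans (mul_le_mul_of_nonneg_left (hk s) (norm_nonneg r)))
  have hamgm : 2 * (‖r‖ * (‖s‖ / γ₀)) ≤ (‖r‖ ^ 2 + ‖s‖ ^ 2) / γ₀ := by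
    rw [← mul_div_assoc, ← mul_div_assoc]
    exact div_le_div_of_nonneg_right (by nlinarith [two_mul_le_add_sq ‖r‖ ‖s‖]) hγ.le
  have hsub : lyapunov η k r s - (‖r‖ ^ 2 + ‖s‖ ^ 2) = -(2 * η * (⟪r, k s⟫).re) := by
    rw [lyapunov]; ring
  calc |lyapunov η k r s - (‖r‖ ^ 2 + ‖s‖ ^ 2)| = 2 * η * |(⟪r, k s⟫).re| := by
        rw [hsub, abs_neg, abs_mul, abs_of_nonneg (by positivity)]
    _ ≤ η * (2 * (‖r‖ * (‖s‖ / γ₀))) := by nlinarith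
    _ ≤ η * ((‖r‖ ^ 2 + ‖s‖ ^ 2) / γ₀) := mul_le_mul_of_nonneg_left hamgm hη
    _ = η / γ₀ * (‖r‖ ^ 2 + ‖s‖ ^ 2) := by ring

lemma hasDerivAt_lyapunov (η : ℝ) (k : F →L[ℂ] E) {r : ℝ → E} {s : ℝ → F} {r' : E} {s' : F}
    {t : ℝ} (hr : HasDerivAt r r' t) (hs : HasDerivAt s s' t) :
    HasDerivAt (fun u => lyapunov η k (r u) (s u))
      (2 * (⟪r t, r'⟫).re + 2 * (⟪s t, s'⟫).re - 2 * η * (⟪r t, k s'⟫ + ⟪r', k (s t)⟫).re) t := by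
  have hks : HasDerivAt (fun u => k (s u)) (k s') t :=
    (k.restrictScalars ℝ).hasFDerivAt.comp_hasDerivAt t hs
  have h := ((hr.inner ℂ hr).add (hs.inner ℂ hs)).sub ((hr.inner ℂ hks).const_mul ((2 * η : ℝ) : ℂ))
  have hre : HasDerivAt (fun u => (⟪r u, r u⟫ + ⟪s u, s u⟫ - (2 * η : ℝ) * ⟪r u, k (s u)⟫).re)
      (⟪r t, r'⟫ + ⟪r', r t⟫ + (⟪s t, s'⟫ + ⟪s', s t⟫)
        - (2 * η : ℝ) * (⟪r t, k s'⟫ + ⟪r', k (s t)⟫)).re t :=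
    Complex.reCLM.hasFDerivAt.comp_hasDerivAt t h
  have hfun : (fun u => lyapunov η k (r u) (s u)) =
      fun u => (⟪r u, r u⟫ + ⟪s u, s u⟫ - (2 * η : ℝ) * ⟪r u, k (s u)⟫).re := by
    funext u
    simp [lyapunov, inner_self_eq_norm_sq_to_K, ← Complex.ofReal_pow]
  rw [hfun]
  refine hre.congr_deriv ?_
  rw [← inner_conj_symm (r t) r', ← inner_conj_symm (s t) s']
  simp only [Complex.sub_re, Complex.add_re, Complex.conj_re, Complex.re_ofReal_mul]
  ring

-- `hproj` below says that `g ∘ k` is the orthogonal projection onto the range of `g`.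
variable [CompleteSpace E] [CompleteSpace F] {g : E →L[ℂ] F} {k : F →L[ℂ] E} {γ₀ η c₀ : ℝ}

lemma norm_apply_apply_sq_eq_re_inner (hproj : ∀ s, (g†) (g (k s)) = (g†) s) (s : F) :
    ‖g (k s)‖ ^ 2 = (⟪s, g (k s)⟫).re := by
  have h : ⟪g (k s), g (k s)⟫ = ⟪s, g (k s)⟫ := by
    rw [← ContinuousLinearMap.adjoint_inner_left, hproj, ContinuousLinearMap.adjoint_inner_left]
  rw [← h]
  exact (inner_self_eq_norm_sq (𝕜 := ℂ) _).symm

lemma norm_apply_apply_le (hproj : ∀ s, (g†) (g (k s)) = (g†) s) (s : F) : ‖g (k s)‖ ≤ ‖s‖ := by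
  have h := norm_apply_apply_sq_eq_re_inner hproj s
  have : (⟪s, g (k s)⟫).re ≤ ‖s‖ * ‖g (k s)‖ :=
    re_inner_le_norm (𝕜 := ℂ) _ _
  nlinarith [norm_nonneg s, norm_nonneg (g (k s))]

lemma norm_apply_le_div (hγ : 0 < γ₀) (hg : ∀ v, γ₀ * ‖v‖ ≤ ‖g v‖)
    (hproj : ∀ s, (g†) (g (k s)) = (g†) s) (s : F) : ‖k s‖ ≤ ‖s‖ / γ₀ := by
  rw [le_div_iff₀ hγ, mul_comm]
  exact (hg (k s)).trans (norm_apply_apply_le hproj s)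

lemma lyapunov_dissipation_le (hη : 0 ≤ η) (hc₀η : c₀ ≤ η)
    (hc₀ : c₀ ≤ 2 * (1 - η) - η / γ₀ ^ 2) (hk : ∀ s, ‖k s‖ ≤ ‖s‖ / γ₀)
    (hproj : ∀ s, (g†) (g (k s)) = (g†) s) (r : E) (s : F) :
    -2 * ‖s‖ ^ 2 - 2 * η * ‖r‖ ^ 2 + 2 * η * (⟪r, k s⟫).re + 2 * η * (⟪s, g (k s)⟫).re ≤
      -c₀ * (‖r‖ ^ 2 + ‖s‖ ^ 2) := by
  have hrk : (⟪r, k s⟫).re ≤ ‖r‖ * (‖s‖ / γ₀) :=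
    (re_inner_le_norm (𝕜 := ℂ) _ _).trans (mul_le_mul_of_nonneg_left (hk s) (norm_nonneg r))
  have hsgk : (⟪s, g (k s)⟫).re ≤ ‖s‖ ^ 2 := by
    rw [← norm_apply_apply_sq_eq_re_inner hproj]
    exact pow_le_pow_left₀ (norm_nonneg _) (norm_apply_apply_le hproj s) 2
  have hamgm : 2 * (‖r‖ * (‖s‖ / γ₀)) ≤ ‖r‖ ^ 2 + ‖s‖ ^ 2 / γ₀ ^ 2 := by
    rw [← div_pow]; linarith [two_mul_le_add_sq ‖r‖ (‖s‖ / γ₀)]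
  have hs_coeff : η / γ₀ ^ 2 * ‖s‖ ^ 2 ≤ (2 * (1 - η) - c₀) * ‖s‖ ^ 2 :=
    mul_le_mul_of_nonneg_right (by linarith) (sq_nonneg _)
  have hrewrite : η * (‖s‖ ^ 2 / γ₀ ^ 2) = η / γ₀ ^ 2 * ‖s‖ ^ 2 := by ring
  nlinarith [sq_nonneg ‖r‖]

variable {r : ℝ → E} {s : ℝ → F} {t : ℝ}

lemma hasDerivAt_lyapunov_flow (hleft : ∀ v, k (g v) = v)
    (hr : HasDerivAt r (-(g†) (s t)) t) (hs : HasDerivAt s (g (r t) - s t) t) :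
    HasDerivAt (fun u => lyapunov η k (r u) (s u))
      (-2 * ‖s t‖ ^ 2 - 2 * η * ‖r t‖ ^ 2 + 2 * η * (⟪r t, k (s t)⟫).re
        + 2 * η * (⟪s t, g (k (s t))⟫).re) t := by
  refine (hasDerivAt_lyapunov η k hr hs).congr_deriv ?_
  rw [map_sub, hleft, inner_sub_right, inner_sub_right, inner_neg_right, inner_neg_left,
    ContinuousLinearMap.adjoint_inner_right, ContinuousLinearMap.adjoint_inner_left,
    ← inner_conj_symm (s t) (g (r t))]
  simp only [Complex.add_re, Complex.sub_re, Complex.neg_re, Complex.conj_re]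
  have hr2 : (⟪r t, r t⟫).re = ‖r t‖ ^ 2 := inner_self_eq_norm_sq (𝕜 := ℂ) _
  have hs2 : (⟪s t, s t⟫).re = ‖s t‖ ^ 2 := inner_self_eq_norm_sq (𝕜 := ℂ) _
  rw [hr2, hs2]
  ring

theorem lyapunov_le_mul_exp (hγ : 0 < γ₀) (hη : 0 ≤ η) (hc₀ : 0 ≤ c₀) (hc₀η : c₀ ≤ η)
    (hc₀γ : c₀ ≤ 2 * (1 - η) - η / γ₀ ^ 2) (hg : ∀ v, γ₀ * ‖v‖ ≤ ‖g v‖)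
    (hleft : ∀ v, k (g v) = v) (hproj : ∀ s, (g†) (g (k s)) = (g†) s)
    (hr : ∀ t, HasDerivAt r (-(g†) (s t)) t) (hs : ∀ t, HasDerivAt s (g (r t) - s t) t)
    (ht : 0 ≤ t) :
    lyapunov η k (r t) (s t) ≤ lyapunov η k (r 0) (s 0) * Real.exp (-(c₀ * t) / (1 + η / γ₀)) := by
  have hk := norm_apply_le_div hγ hg hproj
  have hq : 0 < 1 + η / γ₀ := by positivity
  have hdecay := le_mul_exp_of_hasDerivAt_le_neg_mul (c := c₀ / (1 + η / γ₀))
    (fun u => hasDerivAt_lyapunov_flow (η := η) hleft (hr u) (hs u)) ?_ ht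
  · rwa [neg_mul, div_mul_eq_mul_div, ← neg_div] at hdecay
  intro u _
  have hupper := (abs_le.1 (abs_lyapunov_sub_le hγ hη hk (r u) (s u))).2
  have hscaled : c₀ / (1 + η / γ₀) * lyapunov η k (r u) (s u) ≤ c₀ * (‖r u‖ ^ 2 + ‖s u‖ ^ 2) := by
    calc c₀ / (1 + η / γ₀) * lyapunov η k (r u) (s u)
        ≤ c₀ / (1 + η / γ₀) * ((1 + η / γ₀) * (‖r u‖ ^ 2 + ‖s u‖ ^ 2)) :=
          mul_le_mul_of_nonneg_left (by linarith) (by positivity)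
      _ = c₀ * (‖r u‖ ^ 2 + ‖s u‖ ^ 2) := by field_simp
  linarith [lyapunov_dissipation_le hη hc₀η hc₀γ hk hproj (r u) (s u)]

theorem norm_sq_add_norm_sq_le_mul_exp (hγ : 0 < γ₀) (hη : 0 ≤ η) (hηγ : η < γ₀) (hc₀ : 0 ≤ c₀)
    (hc₀η : c₀ ≤ η) (hc₀γ : c₀ ≤ 2 * (1 - η) - η / γ₀ ^ 2) (hg : ∀ v, γ₀ * ‖v‖ ≤ ‖g v‖)
    (hleft : ∀ v, k (g v) = v) (hproj : ∀ s, (g†) (g (k s)) = (g†) s)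
    (hr : ∀ t, HasDerivAt r (-(g†) (s t)) t) (hs : ∀ t, HasDerivAt s (g (r t) - s t) t)
    (ht : 0 ≤ t) :
    ‖r t‖ ^ 2 + ‖s t‖ ^ 2 ≤ (1 + η / γ₀) / (1 - η / γ₀) * Real.exp (-(c₀ * t) / (1 + η / γ₀)) *
      (‖r 0‖ ^ 2 + ‖s 0‖ ^ 2) := by
  have hk := norm_apply_le_div hγ hg hproj
  have hq : 0 < 1 - η / γ₀ := by rw [sub_pos, div_lt_one hγ]; exact hηγ
  have hlower := (abs_le.1 (abs_lyapunov_sub_le hγ hη hk (r t) (s t))).1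
  have hupper := (abs_le.1 (abs_lyapunov_sub_le hγ hη hk (r 0) (s 0))).2
  have hdecay := lyapunov_le_mul_exp hγ hη hc₀ hc₀η hc₀γ hg hleft hproj hr hs ht
  have hexp := Real.exp_pos (-(c₀ * t) / (1 + η / γ₀))
  rw [div_mul_eq_mul_div, div_mul_eq_mul_div, le_div_iff₀ hq]
  nlinarith

end Lyapunov

section Matrix

variable {α β γ : Type*} [Fintype α] [Fintype β] [Fintype γ] [DecidableEq β] [DecidableEq γ]

lemma matCLM_mul_apply (A : Matrix α β ℂ) (B : Matrix β γ ℂ) (v : EuclideanSpace ℂ γ) :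
    matCLM (A * B) v = matCLM A (matCLM B v) := by
  simp [matCLM, Matrix.toEuclideanLin]

lemma matCLM_one_apply [DecidableEq α] (v : EuclideanSpace ℂ α) :
    matCLM (1 : Matrix α α ℂ) v = v := by
  simp [matCLM, Matrix.toEuclideanLin]

lemma matCLM_conjTranspose [DecidableEq α] (A : Matrix α β ℂ) : matCLM Aᴴ = (matCLM A)† := by
  rw [matCLM, matCLM, Matrix.toEuclideanLin_conjTranspose_eq_adjoint,
    LinearMap.adjoint_toContinuousLinearMap]

open scoped ComplexOrder in
lemma isUnit_det_conjTranspose_mul_self {γ₀ : ℝ} (hγ : 0 < γ₀) (A : Matrix α β ℂ)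
    (hA : ∀ v, γ₀ * ‖v‖ ≤ ‖matCLM A v‖) : IsUnit (Aᴴ * A).det := by
  have hinj : Function.Injective A.mulVec := by
    intro x y hxy
    have h := hA (WithLp.toLp 2 (x - y))
    have hzero : matCLM A (WithLp.toLp 2 (x - y)) = 0 := by
      simp [matCLM, hxy]
    rw [hzero, norm_zero] at h
    have : WithLp.toLp 2 (x - y) = 0 :=
      norm_eq_zero.1 (le_antisymm (nonpos_of_mul_nonpos_right h hγ) (norm_nonneg _))
    simpa [sub_eq_zero] using this
  exact (Matrix.isUnit_iff_isUnit_det _).1 (Matrix.PosDef.conjTranspose_mul_self A hinj).isUnit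

variable [DecidableEq α] {A : Matrix α β ℂ}

lemma matCLM_leftInv_apply_matCLM (hA : IsUnit (Aᴴ * A).det) (v : EuclideanSpace ℂ β) :
    matCLM ((Aᴴ * A)⁻¹ * Aᴴ) (matCLM A v) = v := by
  rw [← matCLM_mul_apply, Matrix.mul_assoc, Matrix.nonsing_inv_mul _ hA, matCLM_one_apply]

lemma adjoint_matCLM_apply_matCLM_leftInv (hA : IsUnit (Aᴴ * A).det) (s : EuclideanSpace ℂ α) :
    ((matCLM A)†) (matCLM A (matCLM ((Aᴴ * A)⁻¹ * Aᴴ) s)) = ((matCLM A)†) s := by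
  rw [← matCLM_conjTranspose, ← matCLM_mul_apply, ← matCLM_mul_apply, ← Matrix.mul_assoc,
    Matrix.mul_nonsing_inv _ hA, Matrix.one_mul]

end Matrix

section Dynamics

variable {m n : ℕ}

def rblockCLM (n m : ℕ) : Jvec n m →L[ℂ] Evec n :=
  LinearMap.toContinuousLinearMap
    { toFun := rblock, map_add' := fun _ _ => rfl, map_smul' := fun _ _ => rfl }

def sblockCLM (n m : ℕ) : Jvec n m →L[ℂ] Evec m :=
  LinearMap.toContinuousLinearMap
    { toFun := sblock, map_add' := fun _ _ => rfl, map_smul' := fun _ _ => rfl }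

@[simp] lemma rblock_joinV (r : Evec n) (s : Evec m) : rblock (joinV r s) = r := rfl

@[simp] lemma sblock_joinV (r : Evec n) (s : Evec m) : sblock (joinV r s) = s := rfl

lemma norm_sq_eq_norm_rblock_sq_add_norm_sblock_sq (w : Jvec n m) :
    ‖w‖ ^ 2 = ‖rblock w‖ ^ 2 + ‖sblock w‖ ^ 2 := by
  simp [EuclideanSpace.norm_sq_eq, Fintype.sum_sum_type, rblock, sblock]

lemma rblock_matCLM_blockM (G : Matrix (Fin m) (Fin n) ℂ) (w : Jvec n m) :
    rblock (matCLM (blockM G) w) = -((matCLM G)†) (sblock w) := by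
  rw [← matCLM_conjTranspose]
  ext i
  simp [rblock, sblock, matCLM, blockM, Matrix.mulVec, dotProduct, Fintype.sum_sum_type]

lemma sblock_matCLM_blockM (G : Matrix (Fin m) (Fin n) ℂ) (w : Jvec n m) :
    sblock (matCLM (blockM G) w) = matCLM G (rblock w) - sblock w := by
  ext j
  simp [rblock, sblock, matCLM, blockM, Matrix.mulVec, dotProduct, Fintype.sum_sum_type,
    Matrix.one_apply, sub_eq_add_neg]

lemma hasDerivAt_wdyn (G : Matrix (Fin m) (Fin n) ℂ) (b : Evec n) (t : ℝ) :
    HasDerivAt (wdyn G b) (matCLM (blockM G) (wdyn G b t)) t :=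
  ((ContinuousLinearMap.apply ℂ (Jvec n m) (joinV b 0)).restrictScalars ℝ).hasFDerivAt
    |>.comp_hasDerivAt t (hasDerivAt_exp_smul_const' (matCLM (blockM G)) t)

lemma wdyn_zero (G : Matrix (Fin m) (Fin n) ℂ) (b : Evec n) : wdyn G b 0 = joinV b 0 := by
  change NormedSpace.exp ((0 : ℝ) • matCLM (blockM G)) (joinV b 0) = _
  rw [zero_smul ℝ (matCLM (blockM G)), NormedSpace.exp_zero, one_apply_eq_self]

lemma hasDerivAt_rblock_wdyn (G : Matrix (Fin m) (Fin n) ℂ) (b : Evec n) (t : ℝ) :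
    HasDerivAt (fun u => rblock (wdyn G b u)) (-((matCLM G)†) (sblock (wdyn G b t))) t := by
  rw [← rblock_matCLM_blockM]
  exact ((rblockCLM n m).restrictScalars ℝ).hasFDerivAt.comp_hasDerivAt t (hasDerivAt_wdyn G b t)

lemma hasDerivAt_sblock_wdyn (G : Matrix (Fin m) (Fin n) ℂ) (b : Evec n) (t : ℝ) :
    HasDerivAt (fun u => sblock (wdyn G b u))
      (matCLM G (rblock (wdyn G b t)) - sblock (wdyn G b t)) t := by
  rw [← sblock_matCLM_blockM]
  exact ((sblockCLM n m).restrictScalars ℝ).hasFDerivAt.comp_hasDerivAt t (hasDerivAt_wdyn G b t)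

end Dynamics

theorem stmt19_lyapunov_exponential_decay (γ₀ η : ℝ)
    (hγ : 0 < γ₀) (hη0 : 0 < η) (hη : η < γ₀)
    (hη2 : 0 < 2 * (1 - η) - η / γ₀ ^ 2) :
    ∃ c₀ : ℝ, 0 < c₀ ∧
      ∀ (m n : ℕ), 0 < m → 0 < n →
        ∀ G : Matrix (Fin m) (Fin n) ℂ,
          (∀ v : Evec n, γ₀ * ‖v‖ ≤ ‖matCLM G v‖) →
          ∀ b : Evec n, ∀ t : ℝ, 0 ≤ t →
            (‖rblock (wdyn G b t)‖ ^ 2 + ‖sblock (wdyn G b t)‖ ^ 2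
                - 2 * η * (⟪rblock (wdyn G b t), matCLM ((Gᴴ * G)⁻¹ * Gᴴ) (sblock (wdyn G b t))⟫).re ≤
              (‖rblock (wdyn G b 0)‖ ^ 2 + ‖sblock (wdyn G b 0)‖ ^ 2
                - 2 * η * (⟪rblock (wdyn G b 0), matCLM ((Gᴴ * G)⁻¹ * Gᴴ) (sblock (wdyn G b 0))⟫).re) *
                Real.exp (-(c₀ * t) / (1 + η / γ₀))) ∧
            ‖wdyn G b t‖ ^ 2 ≤
              ((1 + η / γ₀) / (1 - η / γ₀)) * Real.exp (-(c₀ * t) / (1 + η / γ₀)) * ‖b‖ ^ 2 := by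
  have hc₀ : 0 < min η (2 * (1 - η) - η / γ₀ ^ 2) := lt_min hη0 hη2
  refine ⟨_, hc₀, fun m n _ _ G hG b t ht => ?_⟩
  have hA := isUnit_det_conjTranspose_mul_self hγ G hG
  have hleft := matCLM_leftInv_apply_matCLM hA
  have hproj := adjoint_matCLM_apply_matCLM_leftInv hA
  have hr := hasDerivAt_rblock_wdyn G b
  have hs := hasDerivAt_sblock_wdyn G b
  have hdecay := lyapunov_le_mul_exp hγ hη0.le hc₀.le (min_le_left _ _) (min_le_right _ _) hG hleft
    hproj hr hs ht
  refine ⟨hdecay, ?_⟩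
  have h := norm_sq_add_norm_sq_le_mul_exp hγ hη0.le hη hc₀.le (min_le_left _ _)
    (min_le_right _ _) hG hleft hproj hr hs ht
  rw [norm_sq_eq_norm_rblock_sq_add_norm_sblock_sq]
  simpa [wdyn_zero] using h
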